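/- Consider the following transition system with three robots a, b, c. A global state consists of: a's position in {A₀, P₁}, b's position in {B₀, P₂}, c's position constantly C₀, and a light L(r) ∈ {NIL, M, F} for each robot r. The initial state has a at A₀, b at B₀, and all lights NIL. Call the state Configuration I if a is at A₀ and b at B₀, Configuration II if a is at P₁ and b at B₀, and Configuration III if a is at P₁ and b at P₂. When a robot r is activated it observes the positions of all robots and the lights of the robots other than itself, and acts as follows: if some other robot has light F, it does nothing; otherwise, if some other robot has light M, then if the state is Configuration II and r = b it sets L(b) := F and moves b to P₂, and otherwise it does nothing; otherwise (no M or F visible), if the state is Configuration I and r = a it sets L(a) := M and moves a to P₁, and in every other case (in particular in Configuration II) it does nothing. At each time step an arbitrary nonempty subset of robots is activated, each applying the rule; the schedule is fair, i.e., each robot is activated at infinitely many steps. Then for every fair schedule there exist times t₁ ≤ t₂ such that the state is Configuration I with all lights NIL at every time n ≤ t₁, Configuration II at every time n with t₁ < n ≤ t₂, and Configuration III at every time n > t₂; in particular the system passes through Configuration II and is eventually constant at Configuration III. -/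

import Mathlib

/-- Light colors in Algorithm COMIL. -/
inductive ILLight : Type
  | NIL | M | F
deriving DecidableEq

/-- The three robots of the −IL problem. -/
inductive ILRobot : Type
  | a | b | c
deriving DecidableEq

instance instFintypeILRobot : Fintype ILRobot :=
  ⟨{ILRobot.a, ILRobot.b, ILRobot.c}, fun x => by cases x <;> simp⟩

/-- A global state: `aPos = false` means robot `a` is at `A₀`, `aPos = true` means
it is at `P₁`; `bPos = false` means robot `b` is at `B₀`, `bPos = true` means it is
at `P₂` (robot `c` stays at `C₀` throughout); `light r` is the external light of `r`. -/
structure ILState : Type where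
  aPos : Bool
  bPos : Bool
  light : ILRobot → ILLight

/-- Configuration I: `a` at `A₀` and `b` at `B₀`. -/
abbrev ConfigI (s : ILState) : Prop := s.aPos = false ∧ s.bPos = false

/-- Configuration II: `a` at `P₁` and `b` at `B₀`. -/
abbrev ConfigII (s : ILState) : Prop := s.aPos = true ∧ s.bPos = false

/-- Configuration III: `a` at `P₁` and `b` at `P₂`. -/
abbrev ConfigIII (s : ILState) : Prop := s.aPos = true ∧ s.bPos = true

/-- The initial state: Configuration I with all lights `NIL`. -/
def ILInit : ILState := ⟨false, false, fun _ => ILLight.NIL⟩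

/-- The result of robot `r` applying COMIL's rule in state `s` (only `r`'s own
position and light may change): if `r` sees `F` it does nothing; otherwise if `r`
sees `M`, then in Configuration II robot `b` sets its light to `F` and moves to
`P₂`, and every other robot does nothing; otherwise, in Configuration I robot `a`
sets its light to `M` and moves to `P₁`, and in every other case `r` does nothing. -/
def ILAct (s : ILState) (r : ILRobot) : ILState :=
  if ∃ r' : ILRobot, r' ≠ r ∧ s.light r' = ILLight.F then s
  else if ∃ r' : ILRobot, r' ≠ r ∧ s.light r' = ILLight.M then
    if ConfigII s ∧ r = ILRobot.b then
      { s with bPos := true, light := Function.update s.light ILRobot.b ILLight.F }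
    else s
  else
    if ConfigI s ∧ r = ILRobot.a then
      { s with aPos := true, light := Function.update s.light ILRobot.a ILLight.M }
    else s

/-- Simultaneous activation of the set `A` of robots: each activated robot applies
its rule to the current state, updating only its own position and light. -/
def ILStep (s : ILState) (A : Finset ILRobot) : ILState where
  aPos := if ILRobot.a ∈ A then (ILAct s ILRobot.a).aPos else s.aPos
  bPos := if ILRobot.b ∈ A then (ILAct s ILRobot.b).bPos else s.bPos
  light := fun r => if r ∈ A then (ILAct s r).light r else s.light r

/-! The run visits only three states: `ILInit`, then `stateII` (`a` at `P₁` with light `M`),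
then `stateIII` (`b` at `P₂` with light `F`). Each of them is fixed by every step that does
not activate the one robot able to move in it (`a`, `b`, nobody respectively), and that robot's
activation leads to the next state, so by fairness the run leaves `ILInit` at the first
activation `t₁` of `a` and `stateII` at the first activation `t₂ > t₁` of `b`. -/

def stateII : ILState :=
  ⟨true, false, fun r => if r = ILRobot.a then ILLight.M else ILLight.NIL⟩

def stateIII : ILState :=
  ⟨true, true, fun r =>
    if r = ILRobot.a then ILLight.M else if r = ILRobot.b then ILLight.F else ILLight.NIL⟩

theorem ILRobot.exists_iff {p : ILRobot → Prop} :
    (∃ r, p r) ↔ p ILRobot.a ∨ p ILRobot.b ∨ p ILRobot.c :=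
  ⟨fun ⟨r, hr⟩ => by cases r <;> simp [hr], by rintro (h | h | h) <;> exact ⟨_, h⟩⟩

theorem ILState.eq_iff {s t : ILState} :
    s = t ↔ s.aPos = t.aPos ∧ s.bPos = t.bPos ∧ ∀ r, s.light r = t.light r := by
  cases s; cases t; simp [funext_iff]

theorem ILStep_ILInit (A : Finset ILRobot) :
    ILStep ILInit A = if ILRobot.a ∈ A then stateII else ILInit := by
  rw [apply_ite (ILStep ILInit A = ·), ILState.eq_iff, ILState.eq_iff]
  split_ifs with ha <;>
  · refine ⟨?_, ?_, fun r => ?_⟩ <;> try cases r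
    all_goals simp [ILStep, ILAct, ILInit, stateII, ha, ConfigI]

theorem ILStep_stateII (A : Finset ILRobot) :
    ILStep stateII A = if ILRobot.b ∈ A then stateIII else stateII := by
  rw [apply_ite (ILStep stateII A = ·), ILState.eq_iff, ILState.eq_iff]
  split_ifs with hb <;>
  · refine ⟨?_, ?_, fun r => ?_⟩ <;> try cases r
    all_goals simp [ILStep, ILAct, stateIII, stateII, hb, ILRobot.exists_iff, ConfigI, ConfigII]

theorem ILStep_stateIII (A : Finset ILRobot) : ILStep stateIII A = stateIII := by
  rw [ILState.eq_iff]
  refine ⟨?_, ?_, fun r => ?_⟩ <;> try cases r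
  all_goals simp [ILStep, ILAct, stateIII, ILRobot.exists_iff]

theorem Nat.exists_least_ge_of_exists {P : ℕ → Prop} {N : ℕ} (h : ∃ n, N ≤ n ∧ P n) :
    ∃ t, N ≤ t ∧ P t ∧ ∀ n, N ≤ n → n < t → ¬ P n := by
  classical
  obtain ⟨hNt, hPt⟩ := Nat.find_spec h
  exact ⟨Nat.find h, hNt, hPt, fun n hNn hn hPn => Nat.find_min h hn ⟨hNn, hPn⟩⟩

theorem eq_of_stable_until {α β : Type*} {step : α → β → α} {A : ℕ → β} {run : ℕ → α}
    (hstep : ∀ n, run (n + 1) = step (run n) (A n)) {p : β → Prop} {s : α}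
    (hs : ∀ b, ¬ p b → step s b = s) {N M : ℕ} (hN : run N = s)
    (hM : ∀ n, N ≤ n → n < M → ¬ p (A n)) :
    ∀ n, N ≤ n → n ≤ M → run n = s := by
  intro n hNn hnM
  induction n, hNn using Nat.le_induction with
  | base => exact hN
  | succ k hNk ih => rw [hstep, ih (by omega), hs _ (hM k hNk (by omega))]

theorem COMIL_solves_minusIL_general (A : ℕ → Finset ILRobot)
    (hfair : ∀ (r : ILRobot) (N : ℕ), ∃ n : ℕ, N ≤ n ∧ r ∈ A n)
    (run : ℕ → ILState)
    (h0 : run 0 = ILInit)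
    (hstep : ∀ n : ℕ, run (n + 1) = ILStep (run n) (A n)) :
    ∃ t₁ t₂ : ℕ, t₁ ≤ t₂ ∧
      (∀ n ≤ t₁, ConfigI (run n) ∧ ∀ r : ILRobot, (run n).light r = ILLight.NIL) ∧
      (∀ n : ℕ, t₁ < n → n ≤ t₂ → ConfigII (run n)) ∧
      (∀ n : ℕ, t₂ < n → ConfigIII (run n)) := by
  obtain ⟨t₁, -, ha, ha_min⟩ := Nat.exists_least_ge_of_exists (hfair ILRobot.a 0)
  obtain ⟨t₂, ht, hb, hb_min⟩ := Nat.exists_least_ge_of_exists (hfair ILRobot.b (t₁ + 1))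
  have hI : ∀ n ≤ t₁, run n = ILInit := fun n hn =>
    eq_of_stable_until hstep (p := (ILRobot.a ∈ ·)) (fun _ hA => by simp [ILStep_ILInit, hA]) h0
      ha_min n n.zero_le hn
  have hII_start : run (t₁ + 1) = stateII := by
    rw [hstep, hI t₁ le_rfl, ILStep_ILInit, if_pos ha]
  have hII : ∀ n, t₁ < n → n ≤ t₂ → run n = stateII := fun n h₁ h₂ =>
    eq_of_stable_until hstep (p := (ILRobot.b ∈ ·)) (fun _ hB => by simp [ILStep_stateII, hB])
      hII_start hb_min n h₁ h₂
  have hIII_start : run (t₂ + 1) = stateIII := by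
    rw [hstep, hII t₂ (by omega) le_rfl, ILStep_stateII, if_pos hb]
  have hIII : ∀ n, t₂ < n → run n = stateIII := fun n hn =>
    eq_of_stable_until hstep (p := fun _ => False) (fun A _ => ILStep_stateIII A) hIII_start
      (fun _ _ _ => id) n hn le_rfl
  refine ⟨t₁, t₂, by omega, fun n hn => ?_, fun n h₁ h₂ => ?_, fun n hn => ?_⟩
  · rw [hI n hn]
    exact ⟨⟨rfl, rfl⟩, fun _ => rfl⟩
  · rw [hII n h₁ h₂]
    exact ⟨rfl, rfl⟩
  · rw [hIII n hn]
    exact ⟨rfl, rfl⟩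

/-- Algorithm COMIL solves −IL in `FCOM` under every fair asynchronous schedule:
the run stays in Configuration I with all lights `NIL` up to some time `t₁`, is in
Configuration II strictly between `t₁` and `t₂`, and is in Configuration III
forever after `t₂`. -/
theorem COMIL_solves_minusIL (A : ℕ → Finset ILRobot)
    (hne : ∀ n : ℕ, (A n).Nonempty)
    (hfair : ∀ (r : ILRobot) (N : ℕ), ∃ n : ℕ, N ≤ n ∧ r ∈ A n)
    (run : ℕ → ILState)
    (h0 : run 0 = ILInit)
    (hstep : ∀ n : ℕ, run (n + 1) = ILStep (run n) (A n)) :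
    ∃ t₁ t₂ : ℕ, t₁ ≤ t₂ ∧
      (∀ n ≤ t₁, ConfigI (run n) ∧ ∀ r : ILRobot, (run n).light r = ILLight.NIL) ∧
      (∀ n : ℕ, t₁ < n → n ≤ t₂ → ConfigII (run n)) ∧
      (∀ n : ℕ, t₂ < n → ConfigIII (run n)) :=
  COMIL_solves_minusIL_general A hfair run h0 hstep
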